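/- Suppose lim_{x→a⁺} s(x) = ∞, lim_{x→b} s(x)·M[a,x] = ∞, and μ extends continuously to x = a with a finite value μ(a). Then lim_{x→a⁺} 1/(s(x)·M[a,x]) = μ(a), and z₀ := sup_{x∈(a,b)} 1/(s(x)·M[a,x]) = sup_{x∈(a,b)} 1/ξ′(x) is finite. -/

import Mathlib

open MeasureTheory Filter Set Topology
open scoped Classical

noncomputable section

/-- The state interval `(a, b)` where `a` is real and `b ∈ (a, ∞]`. -/
def stInt (a : ℝ) (b : EReal) : Set ℝ := {x : ℝ | a < x ∧ (x : EReal) < b}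

/-- The filter of approach to the right endpoint `b ∈ (a, ∞]`:
`atTop` when `b = ∞`, and the left-neighborhood filter of `b` otherwise. -/
def atB (b : EReal) : Filter ℝ :=
  if b = ⊤ then Filter.atTop else nhdsWithin b.toReal (Set.Iio b.toReal)

/-- The scale density `s(x) = exp(-∫_{x₀}^x 2μ/σ²)`. -/
def sDen (μ σ : ℝ → ℝ) (x₀ x : ℝ) : ℝ :=
  Real.exp (-(∫ y in x₀..x, 2 * μ y / (σ y) ^ 2))

/-- The speed density `m(x) = 2/(σ(x)² s(x))`. -/
def mDen (μ σ : ℝ → ℝ) (x₀ x : ℝ) : ℝ :=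
  2 / ((σ x) ^ 2 * sDen μ σ x₀ x)

/-- `M[a,x] = ∫_a^x m(u) du`. -/
def Mab (μ σ : ℝ → ℝ) (x₀ a x : ℝ) : ℝ :=
  ∫ u in Set.Ioo a x, mDen μ σ x₀ u

/-- The time potential `ξ(x) = ∫_{x₀}^x M[a,v] s(v) dv`. -/
def xiF (μ σ : ℝ → ℝ) (x₀ a x : ℝ) : ℝ :=
  ∫ v in x₀..x, Mab μ σ x₀ a v * sDen μ σ x₀ v

/-- The running reward potential `g(x) = ∫_{x₀}^x (∫_a^v c(u) m(u) du) s(v) dv`. -/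
def gF (μ σ c : ℝ → ℝ) (x₀ a x : ℝ) : ℝ :=
  ∫ v in x₀..x, (∫ u in Set.Ioo a v, c u * mDen μ σ x₀ u) * sDen μ σ x₀ v

/-- `h(x) = (∫_a^x (γ c(u) + p μ(u)) m(u) du) / M[a,x]`. -/
def hF (μ σ c : ℝ → ℝ) (x₀ a p γ x : ℝ) : ℝ :=
  (∫ u in Set.Ioo a x, (γ * c u + p * μ u) * mDen μ σ x₀ u) / Mab μ σ x₀ a x

/-- The long-term average reward `F(w,y)` of the `(w,y)`-impulse policy. -/
def FF (μ σ c : ℝ → ℝ) (x₀ a p K γ w y : ℝ) : ℝ :=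
  (p * (y - w) - K + γ * (gF μ σ c x₀ a y - gF μ σ c x₀ a w)) /
    (xiF μ σ x₀ a y - xiF μ σ x₀ a w)

/-- `c̄(b)`: equals `⟨c,π⟩` when `M[a,b] < ∞` and the boundary value `c(b)` otherwise. -/
def cbar (μ σ c : ℝ → ℝ) (x₀ a : ℝ) (b : EReal) (cb : ℝ) : ℝ :=
  if MeasureTheory.IntegrableOn (mDen μ σ x₀) (stInt a b) MeasureTheory.volume then
    (∫ u in stInt a b, c u * mDen μ σ x₀ u) / (∫ u in stInt a b, mDen μ σ x₀ u)
  else cb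

/-!
Since `(1/s)' = 2μ/(σ² s) = μ m` and `1/s → 0` at `a`, we get `1/s(x) = ∫_a^x μ m`, so
`1/(s(x) M[a,x])` is the `m`-weighted average of `μ` over `(a,x)`. It therefore tends to `μ(a)` as
`x → a⁺`. For the bound, pick `c` beyond which `s M ≥ 1`: above `c` the function is at most `1`,
and below `c` it is an average of `μ` over a subinterval of `(a,c)`, where `μ` is bounded because it
is continuous on `(a,c]` with a limit at `a`.
-/

lemma abs_integral_mul_div_integral_sub_le {α : Type*} [MeasurableSpace α] {ν : Measure α}
    {g w : α → ℝ} {c ε : ℝ} (hw : Integrable w ν) (hgw : Integrable (fun u => g u * w u) ν)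
    (hw₀ : 0 ≤ᵐ[ν] w) (hpos : 0 < ∫ u, w u ∂ν) (hg : ∀ᵐ u ∂ν, |g u - c| ≤ ε) :
    |(∫ u, g u * w u ∂ν) / (∫ u, w u ∂ν) - c| ≤ ε := by
  have hsub : (∫ u, g u * w u ∂ν) - c * ∫ u, w u ∂ν = ∫ u, (g u - c) * w u ∂ν := by
    rw [← integral_const_mul, ← integral_sub hgw (hw.const_mul c)]
    simp only [sub_mul]
  have hbound : |∫ u, (g u - c) * w u ∂ν| ≤ ε * ∫ u, w u ∂ν := by
    have hint : Integrable (fun u => (g u - c) * w u) ν := by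
      simp_rw [sub_mul]
      exact hgw.sub (hw.const_mul c)
    rw [← integral_const_mul]
    refine abs_integral_le_integral_abs.trans (integral_mono_ae hint.abs (hw.const_mul ε) ?_)
    filter_upwards [hg, hw₀] with u hgu hwu
    rw [abs_mul, abs_of_nonneg hwu]
    exact mul_le_mul_of_nonneg_right hgu hwu
  rwa [div_sub' hpos.ne', mul_comm, hsub, abs_div, abs_of_pos hpos, div_le_iff₀ hpos]

lemma exists_bound_of_continuousOn_Ioo {E : Type*} [NormedAddCommGroup E] {f : ℝ → E}
    {a b : ℝ} {la lb : E} (hf : ContinuousOn f (Ioo a b)) (ha : Tendsto f (𝓝[>] a) (𝓝 la))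
    (hb : Tendsto f (𝓝[<] b) (𝓝 lb)) : ∃ C, ∀ x ∈ Ioo a b, ‖f x‖ ≤ C := by
  obtain ⟨C, hC⟩ :=
    isCompact_Icc.exists_bound_of_continuousOn (continuousOn_Icc_extendFrom_Ioo hf ha hb)
  exact ⟨C, fun x hx => extendFrom_extends hf x hx ▸ hC x (Ioo_subset_Icc_self hx)⟩

section stInt

variable {a : ℝ} {b : EReal}

lemma isOpen_stInt : IsOpen (stInt a b) :=
  isOpen_Ioi.inter (isOpen_Iio.preimage continuous_coe_real_ereal)

lemma ordConnected_stInt : (stInt a b).OrdConnected :=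
  ⟨fun _ hx _ hy _ ht => ⟨hx.1.trans_le ht.1, (EReal.coe_le_coe_iff.2 ht.2).trans_lt hy.2⟩⟩

lemma Ioo_subset_stInt {x : ℝ} (hx : x ∈ stInt a b) : Ioo a x ⊆ stInt a b :=
  fun _ ht => ⟨ht.1, (EReal.coe_lt_coe_iff.2 ht.2).trans hx.2⟩

lemma stInt_mem_nhdsGT (hab : (a : EReal) < b) : stInt a b ∈ 𝓝[>] a :=
  inter_mem_nhdsWithin _
    (continuous_coe_real_ereal.continuousAt.preimage_mem_nhds (Iio_mem_nhds hab))

lemma exists_bound_Ioo_of_continuousOn_stInt {f : ℝ → ℝ} {la : ℝ}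
    (hf : ContinuousOn f (stInt a b)) (ha : Tendsto f (𝓝[>] a) (𝓝 la)) {x : ℝ}
    (hx : x ∈ stInt a b) : ∃ C, ∀ u ∈ Ioo a x, ‖f u‖ ≤ C :=
  exists_bound_of_continuousOn_Ioo (hf.mono (Ioo_subset_stInt hx)) ha
    ((hf.continuousAt (isOpen_stInt.mem_nhds hx)).tendsto.mono_left nhdsWithin_le_nhds)

lemma exists_mem_stInt_forall_gt_of_eventually_atB {P : ℝ → Prop} (hab : (a : EReal) < b)
    (hP : ∀ᶠ x in atB b, P x) : ∃ c ∈ stInt a b, ∀ x ∈ stInt a b, c < x → P x := by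
  induction b with
  | bot => simp at hab
  | top =>
    rw [atB, if_pos rfl] at hP
    obtain ⟨c, hc⟩ := hP.exists_forall_of_atTop
    refine ⟨max c (a + 1), ⟨?_, EReal.coe_lt_top _⟩, fun x _ hx => hc x ?_⟩
    · linarith [le_max_right c (a + 1)]
    · exact (le_max_left _ _).trans hx.le
  | coe B =>
    rw [atB, if_neg (EReal.coe_ne_top B), EReal.toReal_coe] at hP
    obtain ⟨l, hl, hlP⟩ := mem_nhdsLT_iff_exists_Ioo_subset.1 hP
    have haB : a < B := EReal.coe_lt_coe_iff.1 hab
    refine ⟨max l ((a + B) / 2), ⟨?_, ?_⟩, fun x hx hcx => hlP ⟨?_, EReal.coe_lt_coe_iff.1 hx.2⟩⟩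
    · exact lt_max_of_lt_right (by linarith)
    · exact EReal.coe_lt_coe_iff.2 (max_lt hl (by linarith))
    · exact (le_max_left _ _).trans_lt hcx

end stInt

section Diffusion

variable {a : ℝ} {b : EReal} {μ σ : ℝ → ℝ} {x₀ : ℝ}

lemma sDen_pos (x : ℝ) : 0 < sDen μ σ x₀ x := Real.exp_pos _

lemma mDen_pos {x : ℝ} (hσx : 0 < σ x ^ 2) : 0 < mDen μ σ x₀ x :=
  div_pos two_pos (mul_pos hσx (sDen_pos x))

lemma Mab_pos {x : ℝ} (hax : a < x) (hσ : ∀ u ∈ Ioo a x, 0 < σ u ^ 2)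
    (hm : IntegrableOn (mDen μ σ x₀) (Ioo a x)) : 0 < Mab μ σ x₀ a x := by
  have hmpos : ∀ u ∈ Ioo a x, 0 < mDen μ σ x₀ u := fun u hu => mDen_pos (hσ u hu)
  rw [Mab, setIntegral_pos_iff_support_of_nonneg_ae
      ((ae_restrict_iff' measurableSet_Ioo).2 (.of_forall fun u hu => (hmpos u hu).le)) hm,
    inter_eq_right.2 fun u hu => Function.mem_support.2 (hmpos u hu).ne', Real.volume_Ioo]
  simpa using hax

lemma hasDerivAt_inv_sDen (hx₀ : x₀ ∈ stInt a b) (hμcont : ContinuousOn μ (stInt a b))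
    (hσcont : ContinuousOn σ (stInt a b)) (hσpos : ∀ x ∈ stInt a b, 0 < σ x ^ 2) {x : ℝ}
    (hx : x ∈ stInt a b) :
    HasDerivAt (fun t => (sDen μ σ x₀ t)⁻¹) (μ x * mDen μ σ x₀ x) x := by
  have hcont : ContinuousOn (fun y => 2 * μ y / σ y ^ 2) (stInt a b) :=
    (continuousOn_const.mul hμcont).div (hσcont.pow 2) fun y hy => (hσpos y hy).ne'
  have hF : HasDerivAt (fun t => ∫ y in x₀..t, 2 * μ y / σ y ^ 2) (2 * μ x / σ x ^ 2) x :=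
    intervalIntegral.integral_hasDerivAt_right
      (hcont.mono (ordConnected_stInt.uIcc_subset hx₀ hx)).intervalIntegrable
      (hcont.stronglyMeasurableAtFilter isOpen_stInt x hx)
      (hcont.continuousAt (isOpen_stInt.mem_nhds hx))
  have hinv : (fun t => (sDen μ σ x₀ t)⁻¹)
      = fun t => Real.exp (∫ y in x₀..t, 2 * μ y / σ y ^ 2) := by
    funext t
    rw [sDen, Real.exp_neg, inv_inv]
  have hσx := (hσpos x hx).ne'
  rw [hinv]
  convert hF.exp using 1
  rw [mDen, sDen, Real.exp_neg]
  field_simp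

lemma inv_sDen_eq_integral (hx₀ : x₀ ∈ stInt a b) (hμcont : ContinuousOn μ (stInt a b))
    (hσcont : ContinuousOn σ (stInt a b)) (hσpos : ∀ x ∈ stInt a b, 0 < σ x ^ 2)
    (hsa : Tendsto (sDen μ σ x₀) (𝓝[>] a) atTop) {x : ℝ} (hx : x ∈ stInt a b)
    (hint : IntegrableOn (fun u => μ u * mDen μ σ x₀ u) (Ioo a x)) :
    (sDen μ σ x₀ x)⁻¹ = ∫ u in Ioo a x, μ u * mDen μ σ x₀ u := by
  have hderiv := fun t (ht : t ∈ stInt a b) => hasDerivAt_inv_sDen hx₀ hμcont hσcont hσpos ht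
  rw [← integral_Ioc_eq_integral_Ioo, ← intervalIntegral.integral_of_le hx.1.le,
    intervalIntegral.integral_eq_sub_of_hasDerivAt_of_tendsto hx.1
      (fun t ht => hderiv t (Ioo_subset_stInt hx ht))
      ((intervalIntegrable_iff_integrableOn_Ioo_of_le hx.1.le).2 hint) hsa.inv_tendsto_atTop
      ((hderiv x hx).continuousAt.tendsto.mono_left nhdsWithin_le_nhds), sub_zero]

lemma abs_one_div_sDen_mul_Mab_sub_le (hx₀ : x₀ ∈ stInt a b)
    (hμcont : ContinuousOn μ (stInt a b)) (hσcont : ContinuousOn σ (stInt a b))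
    (hσpos : ∀ x ∈ stInt a b, 0 < σ x ^ 2)
    (hMfin : ∀ x ∈ stInt a b, IntegrableOn (mDen μ σ x₀) (Ioo a x))
    (hsa : Tendsto (sDen μ σ x₀) (𝓝[>] a) atTop) {x c ε : ℝ} (hx : x ∈ stInt a b)
    (hμ : ∀ u ∈ Ioo a x, |μ u - c| ≤ ε) :
    |1 / (sDen μ σ x₀ x * Mab μ σ x₀ a x) - c| ≤ ε := by
  have hσ : ∀ u ∈ Ioo a x, 0 < σ u ^ 2 := fun u hu => hσpos u (Ioo_subset_stInt hx hu)
  have hm := hMfin x hx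
  have hint : IntegrableOn (fun u => μ u * mDen μ σ x₀ u) (Ioo a x) :=
    hm.bdd_mul (c := |c| + ε)
      ((hμcont.mono (Ioo_subset_stInt hx)).aestronglyMeasurable measurableSet_Ioo)
      ((ae_restrict_iff' measurableSet_Ioo).2 (.of_forall fun u hu => by
        linarith [hμ u hu, abs_sub_abs_le_abs_sub (μ u) c, Real.norm_eq_abs (μ u)]))
  rw [one_div, mul_inv, inv_sDen_eq_integral hx₀ hμcont hσcont hσpos hsa hx hint,
    ← div_eq_mul_inv]
  exact abs_integral_mul_div_integral_sub_le hm hint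
    ((ae_restrict_iff' measurableSet_Ioo).2 (.of_forall fun u hu => (mDen_pos (hσ u hu)).le))
    (Mab_pos hx.1 hσ hm) ((ae_restrict_iff' measurableSet_Ioo).2 (.of_forall hμ))

lemma tendsto_one_div_sDen_mul_Mab (hab : (a : EReal) < b) (hx₀ : x₀ ∈ stInt a b)
    (hμcont : ContinuousOn μ (stInt a b)) (hσcont : ContinuousOn σ (stInt a b))
    (hσpos : ∀ x ∈ stInt a b, 0 < σ x ^ 2)
    (hMfin : ∀ x ∈ stInt a b, IntegrableOn (mDen μ σ x₀) (Ioo a x))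
    (hsa : Tendsto (sDen μ σ x₀) (𝓝[>] a) atTop) {μa : ℝ} (hμa : Tendsto μ (𝓝[>] a) (𝓝 μa)) :
    Tendsto (fun x => 1 / (sDen μ σ x₀ x * Mab μ σ x₀ a x)) (𝓝[>] a) (𝓝 μa) := by
  refine Metric.tendsto_nhds.2 fun ε hε => ?_
  obtain ⟨u, hau, hu⟩ := mem_nhdsGT_iff_exists_Ioo_subset.1
    ((hμa.eventually (Metric.closedBall_mem_nhds μa (half_pos hε))).and (stInt_mem_nhdsGT hab))
  filter_upwards [Ioo_mem_nhdsGT hau] with x hx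
  refine (abs_one_div_sDen_mul_Mab_sub_le hx₀ hμcont hσcont hσpos hMfin hsa (hu hx).2
    fun y hy => ?_).trans_lt (half_lt_self hε)
  exact (hu ⟨hy.1, hy.2.trans hx.2⟩).1

lemma bddAbove_one_div_sDen_mul_Mab (hab : (a : EReal) < b) (hx₀ : x₀ ∈ stInt a b)
    (hμcont : ContinuousOn μ (stInt a b)) (hσcont : ContinuousOn σ (stInt a b))
    (hσpos : ∀ x ∈ stInt a b, 0 < σ x ^ 2)
    (hMfin : ∀ x ∈ stInt a b, IntegrableOn (mDen μ σ x₀) (Ioo a x))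
    (hsa : Tendsto (sDen μ σ x₀) (𝓝[>] a) atTop)
    (hsMb : Tendsto (fun x => sDen μ σ x₀ x * Mab μ σ x₀ a x) (atB b) atTop)
    {μa : ℝ} (hμa : Tendsto μ (𝓝[>] a) (𝓝 μa)) :
    BddAbove ((fun x => 1 / (sDen μ σ x₀ x * Mab μ σ x₀ a x)) '' stInt a b) := by
  obtain ⟨c, hc, hsM⟩ :=
    exists_mem_stInt_forall_gt_of_eventually_atB hab (hsMb.eventually_ge_atTop 1)
  obtain ⟨C, hC⟩ := exists_bound_Ioo_of_continuousOn_stInt hμcont hμa hc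
  refine ⟨max C 1, forall_mem_image.2 fun x hx => ?_⟩
  rcases le_or_gt x c with hxc | hcx
  · have hle := abs_one_div_sDen_mul_Mab_sub_le hx₀ hμcont hσcont hσpos hMfin hsa hx
      (c := 0) fun u hu => by simpa using hC u ⟨hu.1, hu.2.trans_le hxc⟩
    rw [sub_zero] at hle
    exact le_max_of_le_left ((le_abs_self _).trans hle)
  · have h1 := hsM x hx hcx
    exact le_max_of_le_right ((div_le_one (one_pos.trans_le h1)).2 h1)

end Diffusion

theorem statement4    (a : ℝ) (b : EReal) (hab : (a : EReal) < b)
    (μ σ : ℝ → ℝ) (x₀ : ℝ) (hx₀ : x₀ ∈ stInt a b)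
    (hμcont : ContinuousOn μ (stInt a b)) (hσcont : ContinuousOn σ (stInt a b))
    (hσpos : ∀ x ∈ stInt a b, 0 < (σ x) ^ 2)
    (hMfin : ∀ x ∈ stInt a b, IntegrableOn (mDen μ σ x₀) (Set.Ioo a x))
    (hsa : Tendsto (sDen μ σ x₀) (𝓝[>] a) atTop)
    (hsMb : Tendsto (fun x => sDen μ σ x₀ x * Mab μ σ x₀ a x) (atB b) atTop)
    (μa : ℝ) (hμa : Tendsto μ (𝓝[>] a) (𝓝 μa))
    :
    Tendsto (fun x => 1 / (sDen μ σ x₀ x * Mab μ σ x₀ a x)) (𝓝[>] a) (𝓝 μa) ∧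
    BddAbove ((fun x => 1 / (sDen μ σ x₀ x * Mab μ σ x₀ a x)) '' stInt a b) :=
  ⟨tendsto_one_div_sDen_mul_Mab hab hx₀ hμcont hσcont hσpos hMfin hsa hμa,
    bddAbove_one_div_sDen_mul_Mab hab hx₀ hμcont hσcont hσpos hMfin hsa hsMb hμa⟩
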